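/- Let H be a central arrangement defined by a subspace V ⊆ R^I, and let R(H) = R[e_i : i∈I] / ⟨ Σ_{i∈I_0} a_i e_{I_0∖{i}} : I_0 ⊆ I and Σ_{i∈I_0} a_i x_i|_V = 0 ⟩, where e_S = ∏_{i∈S} e_i. Then the ideal of relations is already generated by the relations coming from circuits I_0 of the matroid of H. -/

import Mathlib

open MvPolynomial

variable {I : Type} [Fintype I] [DecidableEq I]

/-- The `i`-th coordinate function restricted to the subspace `V ⊆ ℝ^I`. -/
noncomputable def coordOn (V : Submodule ℝ (I → ℝ)) (i : I) : V →ₗ[ℝ] ℝ :=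
  (LinearMap.proj i).comp V.subtype

/-- The element `∑_{i ∈ I₀} a_i e_{I₀∖{i}}` of `ℝ[e_i : i ∈ I]`. -/
noncomputable def relElem (I₀ : Finset I) (a : I → ℝ) : MvPolynomial I ℝ :=
  ∑ i ∈ I₀, a i • ∏ j ∈ I₀.erase i, (X j : MvPolynomial I ℝ)

/-- The relation ideal of `R(H)`: generated by `∑_{i∈I₀} a_i e_{I₀∖{i}}` over all
`I₀ ⊆ I` and linear dependences `∑_{i∈I₀} a_i x_i|_V = 0`. -/
noncomputable def relIdeal (V : Submodule ℝ (I → ℝ)) : Ideal (MvPolynomial I ℝ) :=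
  Ideal.span {p | ∃ (I₀ : Finset I) (a : I → ℝ),
    (∑ i ∈ I₀, a i • coordOn V i) = 0 ∧ p = relElem I₀ a}

/-- `I₀` is a circuit: `{x_i|_V : i ∈ I₀}` is linearly dependent but every proper
subset is independent. -/
def IsCircuit (V : Submodule ℝ (I → ℝ)) (I₀ : Finset I) : Prop :=
  ¬ LinearIndependent ℝ (fun i : I₀ => coordOn V i) ∧
    ∀ S : Finset I, S ⊂ I₀ → LinearIndependent ℝ (fun i : S => coordOn V (i : I))

/-- The subideal generated only by circuit relations. -/
noncomputable def circuitIdeal (V : Submodule ℝ (I → ℝ)) : Ideal (MvPolynomial I ℝ) :=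
  Ideal.span {p | ∃ (I₀ : Finset I) (a : I → ℝ), IsCircuit V I₀ ∧
    (∑ i ∈ I₀, a i • coordOn V i) = 0 ∧ p = relElem I₀ a}

/-!
Induct on the support `S` of a dependence `a`. A zero coefficient `a k = 0` factors `e_k` out of
the relation and leaves a dependence on `S.erase k`. If all coefficients are nonzero and `S` is not
a circuit, a dependence `b` on a proper subset of `S` cancels a coefficient: with `r = a k / b k`,
`a = (a - r • b) + r • b` splits the relation of `a` into two relations on `S` that each have a
zero coefficient.
-/

lemma exists_extend_by_zero_of_not_linearIndepOn {ι R M : Type*} [DecidableEq ι] [Ring R]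
    [AddCommGroup M] [Module R M] {v : ι → M} {S T : Finset ι} (hTS : T ⊆ S)
    (hT : ¬ LinearIndepOn R v (T : Set ι)) :
    ∃ b : ι → R, (∀ i ∉ T, b i = 0) ∧ ∑ i ∈ S, b i • v i = 0 ∧ ∃ k ∈ T, b k ≠ 0 := by
  obtain ⟨f, hf, k, hkT, hfk⟩ := not_linearIndepOn_finset_iff.mp hT
  refine ⟨fun i => if i ∈ T then f i else 0, fun i hi => if_neg hi, ?_, k, hkT, by simpa [hkT]⟩
  simp only [ite_smul, zero_smul]
  rwa [Finset.sum_ite_mem, Finset.inter_eq_right.mpr hTS]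

lemma sum_sub_smul_smul_eq_zero {ι R M : Type*} [Ring R] [AddCommGroup M] [Module R M]
    {v : ι → M} {S : Finset ι} {a b : ι → R} (ha : ∑ i ∈ S, a i • v i = 0)
    (hb : ∑ i ∈ S, b i • v i = 0) (r : R) : ∑ i ∈ S, (a - r • b) i • v i = 0 := by
  simp [sub_smul, mul_smul, Finset.sum_sub_distrib, ← Finset.smul_sum, ha, hb]

section

variable {ι : Type} [DecidableEq ι]

lemma relElem_sub_smul (S : Finset ι) (a b : ι → ℝ) (r : ℝ) :
    relElem S (a - r • b) = relElem S a - r • relElem S b := by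
  simp [relElem, sub_smul, Finset.sum_sub_distrib, Finset.smul_sum, mul_smul]

lemma relElem_eq_X_mul_relElem_erase {S : Finset ι} {a : ι → ℝ} {k : ι} (hk : k ∈ S)
    (hak : a k = 0) : relElem S a = X k * relElem (S.erase k) a := by
  rw [relElem, relElem, ← Finset.sum_erase S (a := k) (by simp [hak]), Finset.mul_sum]
  refine Finset.sum_congr rfl fun i hi => ?_
  rw [mul_smul_comm, Finset.erase_right_comm,
    Finset.mul_prod_erase _ _ (Finset.mem_erase.mpr ⟨(Finset.ne_of_mem_erase hi).symm, hk⟩)]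

lemma relElem_mem_circuitIdeal (V : Submodule ℝ (ι → ℝ)) (S : Finset ι) (a : ι → ℝ)
    (ha : ∑ i ∈ S, a i • coordOn V i = 0) : relElem S a ∈ circuitIdeal V := by
  induction S using Finset.strongInduction generalizing a with
  | H S ih =>
  have of_eq_zero (b : ι → ℝ) (hb : ∑ i ∈ S, b i • coordOn V i = 0) (k : ι) (hk : k ∈ S)
      (hbk : b k = 0) : relElem S b ∈ circuitIdeal V := by
    rw [relElem_eq_X_mul_relElem_erase hk hbk]
    refine Ideal.mul_mem_left _ _ (ih _ (Finset.erase_ssubset hk) b ?_)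
    rwa [Finset.sum_erase S (by simp [hbk])]
  by_cases hzero : ∃ k ∈ S, a k = 0
  · obtain ⟨k, hk, hak⟩ := hzero
    exact of_eq_zero a ha k hk hak
  push Not at hzero
  by_cases hcirc : ∀ T ⊂ S, LinearIndependent ℝ (fun i : T => coordOn V (i : ι))
  · rcases S.eq_empty_or_nonempty with rfl | ⟨k, hk⟩
    · simp [relElem]
    have hdep : ¬ LinearIndependent ℝ (fun i : S => coordOn V i) := fun h =>
      hzero k hk (linearIndepOn_finset_iff.mp h a ha k hk)
    exact Ideal.subset_span ⟨S, a, ⟨hdep, hcirc⟩, ha, rfl⟩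
  push Not at hcirc
  obtain ⟨T, hTS, hT⟩ := hcirc
  obtain ⟨j, hjS, hjT⟩ := Finset.exists_of_ssubset hTS
  obtain ⟨b, hb_out, hb, k, hkT, hbk⟩ :=
    exists_extend_by_zero_of_not_linearIndepOn (v := fun i => coordOn V i) hTS.subset hT
  set r := a k / b k
  have hc : ∑ i ∈ S, (a - r • b) i • coordOn V i = 0 := sum_sub_smul_smul_eq_zero ha hb r
  have hck : (a - r • b) k = 0 := by simp [r, div_mul_cancel₀ _ hbk]
  have hsplit : relElem S a = relElem S (a - r • b) + r • relElem S b := by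
    rw [relElem_sub_smul, sub_add_cancel]
  rw [hsplit, smul_eq_C_mul]
  exact add_mem (of_eq_zero _ hc k (hTS.subset hkT) hck)
    (Ideal.mul_mem_left _ _ (of_eq_zero b hb j hjS (hb_out j hjT)))

end

/-- for a central arrangement given by `V ⊆ ℝ^I`, the relation ideal of
`R(H) = ℝ[e_i : i ∈ I] / ⟨∑_{i∈I₀} a_i e_{I₀∖{i}} : ∑_{i∈I₀} a_i x_i|_V = 0⟩` is
already generated by the relations coming from the circuits of the matroid of `H`. -/
theorem stmt14 (V : Submodule ℝ (I → ℝ)) :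
    relIdeal V = circuitIdeal V := by
  refine le_antisymm (Ideal.span_le.mpr ?_) (Ideal.span_mono ?_)
  · rintro p ⟨I₀, a, ha, rfl⟩
    exact relElem_mem_circuitIdeal V I₀ a ha
  · rintro p ⟨I₀, a, -, ha, rfl⟩
    exact ⟨I₀, a, ha, rfl⟩
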